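/- arXiv:2009.10124 — 2 statements merged into one kernel-verified Lean document; each statement's English description precedes it below -/
import Mathlib

section
/- Exponentially weighted two-point string-sum bound (first-step inequality of the Supplement). For all sites i, i' ∈ Λ and every t with 2e·g̃·|t| ≤ 1, Σ_{m'=0}^{∞} ((2|t|)^{m'}/m'!) · Σ_{(Z₀,…,Z_{m'}) connected, {i,i'} ⊆ Z₀∪⋯∪Z_{m'}} ∏_{j=0}^{m'} a_{Z_j} ≤ 6 g̃ (d(i,i')+1)^{−α}. -/
open scoped Classical ENNReal Matrix ComplexOrder
open Complex

noncomputable section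

/-- Spin configurations of a lattice `Λ` of (1/2)-spins. -/
abbrev SpinConf (Λ : Type) := Λ → Fin 2

/-- Operators on the Hilbert space `⨂_{i∈Λ} ℂ²`, realized as complex matrices
indexed by spin configurations. -/
abbrev SpinOp (Λ : Type) [Fintype Λ] [DecidableEq Λ] := Matrix (SpinConf Λ) (SpinConf Λ) ℂ

section GeneralMatrices

variable {n : Type} [Fintype n] [DecidableEq n]

/-- The operator norm `‖·‖` (largest singular value). -/
noncomputable def opNorm (A : Matrix n n ℂ) : ℝ :=
  ‖Matrix.toEuclideanCLM (𝕜 := ℂ) A‖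

/-- The normalized Frobenius norm `‖O‖_F := √(tr(O†O)/tr(1̂))`. -/
noncomputable def frobNorm (A : Matrix n n ℂ) : ℝ :=
  Real.sqrt ((Aᴴ * A).trace.re / (Fintype.card n))

/-- The Schatten `p`-norm; for `p = ∞` it is the operator norm, otherwise it is the
`ℓ^p` norm of the singular values. -/
noncomputable def schattenNorm (p : ℝ≥0∞) (A : Matrix n n ℂ) : ℝ :=
  if p = ⊤ then opNorm A
  else (∑ i, Real.sqrt ((Matrix.posSemidef_conjTranspose_mul_self A).1.eigenvalues i)
      ^ p.toReal) ^ (1 / p.toReal)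

/-- The commutator `[A,B] := AB - BA`. -/
def commM (A B : Matrix n n ℂ) : Matrix n n ℂ := A * B - B * A

/-- `U` is a unitary matrix. -/
def IsUnitaryM (U : Matrix n n ℂ) : Prop := Uᴴ * U = 1 ∧ U * Uᴴ = 1

/-- Heisenberg time evolution `O(t) := e^{iHt} O e^{-iHt}`. -/
noncomputable def timeEv (H : Matrix n n ℂ) (t : ℝ) (A : Matrix n n ℂ) : Matrix n n ℂ :=
  NormedSpace.exp ((Complex.I * (t : ℂ)) • H) * A *
    NormedSpace.exp ((-(Complex.I * (t : ℂ))) • H)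

end GeneralMatrices

variable {Λ : Type} [Fintype Λ] [DecidableEq Λ]

/-- `A = A_X ⊗ 1_{X^c}`: the matrix entries vanish unless the configurations agree
outside `X`, and depend only on the configurations inside `X`. -/
def IsSupportedOn (A : SpinOp Λ) (X : Finset Λ) : Prop :=
  (∀ a b : SpinConf Λ, (∃ i ∉ X, a i ≠ b i) → A a b = 0) ∧
  (∀ a b a' b' : SpinConf Λ, (∀ i ∈ X, a i = a' i) → (∀ i ∈ X, b i = b' i) →
    (∀ i ∉ X, a i = b i) → (∀ i ∉ X, a' i = b' i) → A a b = A a' b')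

/-- The localization `(tr_{X^c}[A]/tr_{X^c}(1̂)) ⊗ 1_{X^c}` of an operator `A`
onto the subset `X` (normalized partial trace over `X^c` tensored with identity). -/
noncomputable def localize (A : SpinOp Λ) (X : Finset Λ) : SpinOp Λ := fun a b =>
  (if ∀ i ∉ X, a i = b i then (1 : ℂ) else 0) *
    (∑ c : SpinConf Λ,
      A (fun i => if i ∈ X then a i else c i) (fun i => if i ∈ X then b i else c i))
    / (2 ^ Fintype.card Λ)

/-- `d` is a metric taking nonnegative integer values. -/
def IsLatticeMetric (d : Λ → Λ → ℕ) : Prop :=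
  (∀ i j, d i j = d j i) ∧ (∀ i j, d i j = 0 ↔ i = j) ∧
    (∀ i j l, d i l ≤ d i j + d j l)

/-- The ball `i[r] := {j : d(i,j) ≤ r}`. -/
def ball (d : Λ → Λ → ℕ) (i : Λ) (r : ℕ) : Finset Λ :=
  Finset.univ.filter (fun j => d i j ≤ r)

/-- The extended set `X[r] := ⋃_{i∈X} i[r]`. -/
def extend (d : Λ → Λ → ℕ) (X : Finset Λ) (r : ℕ) : Finset Λ :=
  Finset.univ.filter (fun j => ∃ i ∈ X, d i j ≤ r)

/-- The distance from a site to a (nonempty) finite set of sites. -/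
noncomputable def distSet (d : Λ → Λ → ℕ) (i : Λ) (S : Finset Λ) : ℕ :=
  sInf {m : ℕ | ∃ j ∈ S, d i j = m}

/-- The inner boundary `∂X := {i ∈ X : d(i,X^c) = 1}`. -/
noncomputable def bdry (d : Λ → Λ → ℕ) (X : Finset Λ) : Finset Λ :=
  X.filter (fun i => distSet d i Xᶜ = 1)

/-- The layer `(∂X)_s`: the sites of `X` at distance `-s` from `∂X` when `s ≤ 0`,
and the sites of `X^c` at distance `s` from `∂X` when `s > 0`. -/
noncomputable def layer (d : Λ → Λ → ℕ) (X : Finset Λ) (s : ℤ) : Finset Λ :=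
  if s ≤ 0 then X.filter (fun i => (distSet d i (bdry d X) : ℤ) = -s)
  else Xᶜ.filter (fun i => (distSet d i (bdry d X) : ℤ) = s)

/-- The four single-site Pauli matrices `σ⁰ = 1, σˣ, σʸ, σᶻ`. -/
def pauli : Fin 4 → Matrix (Fin 2) (Fin 2) ℂ :=
  ![1, !![0, 1; 1, 0], !![0, -Complex.I; Complex.I, 0], !![1, 0; 0, -1]]

/-- A Pauli string `⨂_{i∈Λ} σ^{p(i)}`. -/
noncomputable def pauliString (p : Λ → Fin 4) : SpinOp Λ :=
  fun a b => ∏ i, pauli (p i) (a i) (b i)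

/-- The Pauli expansion coefficient `tr(P_p A)/2^{|Λ|}` of `A` at the string `p`. -/
noncomputable def pauliCoeff (A : SpinOp Λ) (p : Λ → Fin 4) : ℂ :=
  (pauliString p * A).trace / (2 ^ Fintype.card Λ)

/-- `J := 3^{k/2} J₀`. -/
noncomputable def Jconst (k : ℕ) (J₀ : ℝ) : ℝ := Real.sqrt 3 ^ k * J₀

/-- `g̃ := max(gk, λJ)` with `J = 3^{k/2} J₀`. -/
noncomputable def gTilde (k : ℕ) (J₀ g lam : ℝ) : ℝ := max (g * k) (lam * Jconst k J₀)

/-- `C₀ := 2^{α-D/2+2} J₀ γ/(2α-D-1) + (80 g̃ γ 2^{α-D/2}/(α-D)) √(2α-2D+γ)`. -/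
noncomputable def C0 (α J₀ γ : ℝ) (D : ℕ) (gt : ℝ) : ℝ :=
  (2 : ℝ) ^ (α - (D : ℝ) / 2 + 2) * J₀ * γ / (2 * α - (D : ℝ) - 1) +
    (80 * gt * γ * (2 : ℝ) ^ (α - (D : ℝ) / 2) / (α - (D : ℝ))) *
      Real.sqrt (2 * α - 2 * (D : ℝ) + γ)

end

/-- A sequence `(Z₀,…,Z_m)` of subsets is connected if each `Z_j` (`j ≥ 1`)
intersects `Z₀ ∪ ⋯ ∪ Z_{j-1}`. -/
def SeqConnected {Λ : Type} [Fintype Λ] [DecidableEq Λ] {m : ℕ}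
    (w : Fin (m + 1) → Finset Λ) : Prop :=
  ∀ j : Fin (m + 1), 0 < (j : ℕ) →
    (w j ∩ (Finset.univ.filter
      (fun j' : Fin (m + 1) => (j' : ℕ) < (j : ℕ))).biUnion w).Nonempty

/-!
Write `T_m(x, y)` for the sum of `∏ a(Z_j)` over connected strings `(Z₀, …, Z_m)` with
`|Z_j| ≤ k` whose union `U` contains `x` and `y`, and `N_m(x)` for the analogous sum with only
`x ∈ U`. Removing the last set `Z` of a string, which must meet `U`, and using
`1[x ∈ U ∪ Z] ≤ 1[x ∈ U] + 1[x ∈ Z]` gives recursions in `m`. Summing `a_Z` over all `Z`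
meeting `U` costs at most `g |U| ≤ g k (m + 1)`; when `Z` carries `x` or `y`, pinning `Z` at a
point `z ∈ U ∩ Z` leaves `T_m(x, z)` or `N_m(z)` times a pair sum
`∑_{Z ∋ z, y} a_Z ≤ J (d(z, y) + 1)^{-α}`, which the convolution bound for `(d + 1)^{-α}`
absorbs. By induction `N_m ≤ g (m + 1)! g̃^m` and
`T_m(x, y) ≤ (m + 1) (m + 1)! g̃^m J (d(x, y) + 1)^{-α}`, so the series is at most
`J (d(i, i') + 1)^{-α} ∑ (m + 1)² r^m` with `r = 2 |t| g̃ ≤ 1/e`, where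
`∑ (m + 1)² r^m = (1 + r) / (1 - r)³ < 6`.
-/

open Finset

theorem sum_range_sq_mul_pow_le {x : ℝ} (hx0 : 0 ≤ x) (hx : Real.exp 1 * x ≤ 1) (M : ℕ) :
    ∑ m ∈ range M, ((m : ℝ) + 1) ^ 2 * x ^ m ≤ 6 := by
  have hx37 : x ≤ 37 / 100 := by nlinarith [Real.exp_one_gt_d9]
  have hnorm : ‖x‖ < 1 := by rw [Real.norm_of_nonneg hx0]; linarith
  have hsum := ((hasSum_choose_mul_geometric_of_norm_lt_one 2 hnorm).mul_left 2).sub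
    (hasSum_choose_mul_geometric_of_norm_lt_one 1 hnorm)
  have hterm : ∀ m : ℕ, 2 * (((m + 2).choose 2 : ℕ) * x ^ m) - ((m + 1).choose 1 : ℕ) * x ^ m =
      ((m : ℝ) + 1) ^ 2 * x ^ m := fun m => by
    rw [Nat.cast_choose_two, Nat.choose_one_right]; push_cast; ring
  simp only [hterm] at hsum
  refine (sum_le_hasSum (range M) (fun m _ => by positivity) hsum).trans ?_
  have h63 : 63 / 100 ≤ 1 - x := by linarith
  rw [show 2 * (1 / (1 - x) ^ (2 + 1)) - 1 / (1 - x) ^ (1 + 1) = (1 + x) / (1 - x) ^ 3 by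
    field_simp; ring, div_le_iff₀ (by positivity)]
  nlinarith [pow_le_pow_left₀ (by norm_num) h63 3]

theorem sum_range_pow_div_factorial_mul_le {s G c : ℝ} (hs : 0 ≤ s) (hG : 0 ≤ G) (hc : 0 ≤ c)
    (h : Real.exp 1 * (s * G) ≤ 1) (M : ℕ) :
    ∑ m ∈ range M, s ^ m / (m.factorial : ℝ) * ((m + 1) * (m + 1).factorial * G ^ m * c) ≤
      6 * c := by
  calc _ = c * ∑ m ∈ range M, ((m : ℝ) + 1) ^ 2 * (s * G) ^ m := by
        rw [mul_sum]
        refine sum_congr rfl fun m _ => ?_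
        rw [Nat.factorial_succ]
        field_simp
        push_cast
        ring
    _ ≤ c * 6 := mul_le_mul_of_nonneg_left (sum_range_sq_mul_pow_le (by positivity) h M) hc
    _ = 6 * c := mul_comm _ _

theorem sum_const_mul_mul_const_mul_le {ι : Type*} [Fintype ι] {K : ι → ι → ℝ} {μ : ℝ}
    (hconv : ∀ x y, ∑ z, K x z * K z y ≤ μ * K x y) (c : ℝ) (x y : ι) :
    ∑ z, c * K x z * (c * K z y) ≤ μ * c * (c * K x y) :=
  calc ∑ z, c * K x z * (c * K z y) = c ^ 2 * ∑ z, K x z * K z y := by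
        rw [mul_sum]; exact sum_congr rfl fun z _ => by ring
    _ ≤ c ^ 2 * (μ * K x y) := mul_le_mul_of_nonneg_left (hconv x y) (sq_nonneg c)
    _ = μ * c * (c * K x y) := by ring

namespace ConnectedString

noncomputable section

section Strings

variable {Λ : Type} [DecidableEq Λ] {m : ℕ}

def stringUnion (w : Fin (m + 1) → Finset Λ) : Finset Λ := univ.biUnion w

theorem stringUnion_snoc (v : Fin (m + 1) → Finset Λ) (Z : Finset Λ) :
    stringUnion (Fin.snoc v Z : Fin (m + 2) → Finset Λ) = stringUnion v ∪ Z := by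
  ext x
  simp [stringUnion, Fin.exists_fin_succ', or_comm]

theorem biUnion_filter_lt_snoc {c : ℕ} (v : Fin (m + 1) → Finset Λ) (Z : Finset Λ)
    (hc : c ≤ m + 1) :
    (univ.filter fun j : Fin (m + 2) => (j : ℕ) < c).biUnion
        (Fin.snoc v Z : Fin (m + 2) → Finset Λ) =
      (univ.filter fun j : Fin (m + 1) => (j : ℕ) < c).biUnion v := by
  ext x
  simp only [mem_biUnion, mem_filter, mem_univ, true_and, Fin.exists_fin_succ',
    Fin.snoc_castSucc, Fin.val_castSucc, Fin.snoc_last, Fin.val_last]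
  simp [show ¬m + 1 < c by omega]

variable [Fintype Λ]

theorem seqConnected_snoc (v : Fin (m + 1) → Finset Λ) (Z : Finset Λ) :
    SeqConnected (Fin.snoc v Z : Fin (m + 2) → Finset Λ) ↔
      SeqConnected v ∧ (Z ∩ stringUnion v).Nonempty := by
  have hlast : (univ.filter fun j : Fin (m + 1) => (j : ℕ) < m + 1) = univ :=
    filter_true_of_mem fun j _ => j.isLt
  simp only [SeqConnected, Fin.forall_fin_succ', Fin.snoc_castSucc, Fin.val_castSucc,
    Fin.snoc_last, Fin.val_last, biUnion_filter_lt_snoc v Z (Fin.is_lt _).le,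
    biUnion_filter_lt_snoc v Z le_rfl, hlast, stringUnion]
  simp

theorem sum_fin_snoc {β M : Type*} [Fintype β] [AddCommMonoid M] (F : (Fin (m + 2) → β) → M) :
    ∑ w, F w = ∑ v : Fin (m + 1) → β, ∑ Z, F (Fin.snoc v Z) := by
  rw [← (Fin.snocEquiv fun _ => β).sum_comp, Fintype.sum_prod_type, sum_comm]
  rfl

end Strings

section Weights

variable {Λ : Type} [DecidableEq Λ] (k : ℕ) (a : Finset Λ → ℝ)

def memInd (x : Λ) (U : Finset Λ) : ℝ := if x ∈ U then 1 else 0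

def attachWeight (U Z : Finset Λ) : ℝ :=
  if (Z.Nonempty ∧ Z.card ≤ k) ∧ (Z ∩ U).Nonempty then a Z else 0

theorem sum_mul_memInd_eq_sum_filter [Fintype Λ] (x : Λ) :
    ∑ Z, a Z * memInd x Z = ∑ Z ∈ univ.filter (fun Z => x ∈ Z), a Z := by
  simp [memInd, sum_filter]

theorem sum_mul_memInd_mul_memInd_eq_sum_filter [Fintype Λ] (x y : Λ) :
    ∑ Z, a Z * memInd x Z * memInd y Z = ∑ Z ∈ univ.filter (fun Z => x ∈ Z ∧ y ∈ Z), a Z := by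
  rw [sum_filter]
  refine sum_congr rfl fun Z _ => ?_
  simp only [memInd]
  split_ifs <;> simp_all

theorem memInd_nonneg (x : Λ) (U : Finset Λ) : 0 ≤ memInd x U := by
  unfold memInd; split_ifs <;> norm_num

theorem memInd_union_le (x : Λ) (U V : Finset Λ) :
    memInd x (U ∪ V) ≤ memInd x U + memInd x V := by
  unfold memInd; split_ifs <;> simp_all

variable {k a} (ha : ∀ Z, 0 ≤ a Z)
include ha

theorem attachWeight_nonneg (U Z : Finset Λ) : 0 ≤ attachWeight k a U Z := by
  unfold attachWeight; split_ifs
  exacts [ha Z, le_rfl]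

theorem attachWeight_le_sum_singleton (U Z : Finset Λ) :
    attachWeight k a U Z ≤ ∑ z ∈ U, attachWeight k a {z} Z := by
  unfold attachWeight
  split_ifs with h
  · obtain ⟨z, hz⟩ := h.2
    rw [mem_inter] at hz
    calc a Z = attachWeight k a {z} Z := by simp [attachWeight, h.1, hz.1]
      _ ≤ ∑ z ∈ U, attachWeight k a {z} Z :=
        single_le_sum (fun z _ => attachWeight_nonneg ha _ _) hz.2
  · exact sum_nonneg fun z _ => attachWeight_nonneg ha _ _

theorem attachWeight_singleton_le (z : Λ) (Z : Finset Λ) :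
    attachWeight k a {z} Z ≤ a Z * memInd z Z := by
  unfold attachWeight memInd
  split_ifs <;> simp_all

theorem sum_attachWeight_singleton_le [Fintype Λ] (Z : Finset Λ) :
    ∑ z, attachWeight k a {z} Z ≤ k * a Z := by
  by_cases hZ : Z.Nonempty ∧ Z.card ≤ k
  · have h : ∀ z, attachWeight k a {z} Z = if z ∈ Z then a Z else 0 := fun z => by
      by_cases hz : z ∈ Z <;> simp [attachWeight, hZ, hz]
    simp only [h, sum_ite_mem, univ_inter, sum_const, nsmul_eq_mul]
    exact mul_le_mul_of_nonneg_right (by exact_mod_cast hZ.2) (ha Z)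
  · simp only [attachWeight, hZ, false_and, if_false, sum_const_zero]
    exact mul_nonneg k.cast_nonneg (ha Z)

end Weights

section StringSums

variable {Λ : Type} [Fintype Λ] [DecidableEq Λ] (k : ℕ) (a : Finset Λ → ℝ) {m : ℕ} {g : ℝ}

def IsAdmissible (w : Fin (m + 1) → Finset Λ) : Prop :=
  (∀ j, (w j).Nonempty ∧ (w j).card ≤ k) ∧ SeqConnected w

def stringWeight (w : Fin (m + 1) → Finset Λ) : ℝ :=
  if IsAdmissible k w then ∏ j, a (w j) else 0

variable (m) in
def stringSum (φ : Finset Λ → ℝ) : ℝ :=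
  ∑ w : Fin (m + 1) → Finset Λ, stringWeight k a w * φ (stringUnion w)

theorem isAdmissible_snoc (v : Fin (m + 1) → Finset Λ) (Z : Finset Λ) :
    IsAdmissible k (Fin.snoc v Z : Fin (m + 2) → Finset Λ) ↔
      IsAdmissible k v ∧ (Z.Nonempty ∧ Z.card ≤ k) ∧ (Z ∩ stringUnion v).Nonempty := by
  simp only [IsAdmissible, Fin.forall_fin_succ', Fin.snoc_castSucc, Fin.snoc_last,
    seqConnected_snoc]
  tauto

theorem stringWeight_snoc (v : Fin (m + 1) → Finset Λ) (Z : Finset Λ) :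
    stringWeight k a (Fin.snoc v Z : Fin (m + 2) → Finset Λ) =
      stringWeight k a v * attachWeight k a (stringUnion v) Z := by
  simp only [stringWeight, attachWeight, isAdmissible_snoc, Fin.prod_univ_castSucc,
    Fin.snoc_castSucc, Fin.snoc_last]
  split_ifs <;> simp_all

theorem stringSum_succ (φ : Finset Λ → ℝ) :
    stringSum k a (m + 1) φ = ∑ v : Fin (m + 1) → Finset Λ, ∑ Z,
      stringWeight k a v * attachWeight k a (stringUnion v) Z * φ (stringUnion v ∪ Z) := by
  rw [stringSum, sum_fin_snoc]
  simp only [stringWeight_snoc, stringUnion_snoc]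

theorem sum_stringWeight_mul_sum_mem (φ : Finset Λ → ℝ) (χ : Λ → ℝ) :
    ∑ w : Fin (m + 1) → Finset Λ, stringWeight k a w * φ (stringUnion w) *
        ∑ z ∈ stringUnion w, χ z =
      ∑ z, χ z * stringSum k a m (fun U => φ U * memInd z U) := by
  have h (U : Finset Λ) : ∑ z ∈ U, χ z = ∑ z, memInd z U * χ z := by
    simp [memInd]
  simp only [h, stringSum, mul_sum]
  rw [sum_comm]
  exact sum_congr rfl fun z _ => sum_congr rfl fun w _ => by ring

theorem sum_filter_eq_stringSum (x y : Λ) :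
    ∑ w ∈ univ.filter (fun w : Fin (m + 1) → Finset Λ =>
        (∀ j, (w j).Nonempty ∧ (w j).card ≤ k) ∧ SeqConnected w ∧
        x ∈ univ.biUnion w ∧ y ∈ univ.biUnion w), ∏ j, a (w j) =
      stringSum k a m (fun U => memInd x U * memInd y U) := by
  rw [sum_filter, stringSum]
  refine sum_congr rfl fun w _ => ?_
  change (if _ ∧ _ ∧ x ∈ stringUnion w ∧ y ∈ stringUnion w then _ else 0) = _
  rw [stringWeight, IsAdmissible]
  by_cases hx : x ∈ stringUnion w <;> by_cases hy : y ∈ stringUnion w <;> simp [memInd, hx, hy]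

-- The right side of `stringSum_succ` with `φ (U ∪ Z)` replaced by a product `φ U * ψ Z`.
variable (m) in
def extensionSum (φ ψ : Finset Λ → ℝ) : ℝ :=
  ∑ v : Fin (m + 1) → Finset Λ, ∑ Z,
    stringWeight k a v * attachWeight k a (stringUnion v) Z * (φ (stringUnion v) * ψ Z)

variable {k} in
theorem card_stringUnion_le {v : Fin (m + 1) → Finset Λ} (hv : IsAdmissible k v) :
    (stringUnion v).card ≤ k * (m + 1) := by
  calc (stringUnion v).card ≤ ∑ j, (v j).card := card_biUnion_le
    _ ≤ ∑ _j : Fin (m + 1), k := sum_le_sum fun j _ => (hv.1 j).2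
    _ = k * (m + 1) := by simp [mul_comm]

variable {k a} (ha : ∀ Z, 0 ≤ a Z)
include ha

theorem stringWeight_nonneg (w : Fin (m + 1) → Finset Λ) : 0 ≤ stringWeight k a w := by
  unfold stringWeight; split_ifs
  exacts [prod_nonneg fun j _ => ha _, le_rfl]

theorem stringSum_nonneg {φ : Finset Λ → ℝ} (hφ : ∀ U, 0 ≤ φ U) : 0 ≤ stringSum k a m φ :=
  sum_nonneg fun w _ => mul_nonneg (stringWeight_nonneg ha w) (hφ _)

theorem stringSum_zero_le {φ : Finset Λ → ℝ} (hφ : ∀ U, 0 ≤ φ U) :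
    stringSum k a 0 φ ≤ ∑ Z, a Z * φ Z := by
  rw [stringSum, ← (Equiv.funUnique (Fin 1) (Finset Λ)).symm.sum_comp]
  refine sum_le_sum fun Z _ => ?_
  have hU : stringUnion ((Equiv.funUnique (Fin 1) (Finset Λ)).symm Z) = Z := by
    simp [stringUnion]
  rw [hU]
  refine mul_le_mul_of_nonneg_right ?_ (hφ Z)
  unfold stringWeight
  split_ifs
  exacts [by simp, ha Z]

theorem sum_attachWeight_le (hsite : ∀ x, ∑ Z, a Z * memInd x Z ≤ g) (U : Finset Λ) :
    ∑ Z, attachWeight k a U Z ≤ g * U.card := by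
  calc ∑ Z, attachWeight k a U Z ≤ ∑ Z, ∑ z ∈ U, attachWeight k a {z} Z :=
        sum_le_sum fun Z _ => attachWeight_le_sum_singleton ha U Z
    _ = ∑ z ∈ U, ∑ Z, attachWeight k a {z} Z := sum_comm
    _ ≤ ∑ _z ∈ U, g := sum_le_sum fun z _ =>
        (sum_le_sum fun Z _ => attachWeight_singleton_le ha z Z).trans (hsite z)
    _ = g * U.card := by rw [sum_const, nsmul_eq_mul, mul_comm]

theorem extensionSum_le_card (hg : 0 ≤ g) (hsite : ∀ x, ∑ Z, a Z * memInd x Z ≤ g)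
    {φ : Finset Λ → ℝ} (hφ : ∀ U, 0 ≤ φ U) :
    extensionSum k a m φ (fun _ => 1) ≤ g * k * (m + 1) * stringSum k a m φ := by
  rw [stringSum, mul_sum]
  refine sum_le_sum fun v _ => ?_
  have hWφ : 0 ≤ stringWeight k a v * φ (stringUnion v) :=
    mul_nonneg (stringWeight_nonneg ha v) (hφ _)
  by_cases hv : IsAdmissible k v
  · have hattach : ∑ Z, attachWeight k a (stringUnion v) Z ≤ g * k * (m + 1) := by
      refine (sum_attachWeight_le ha hsite _).trans ?_
      rw [mul_assoc]
      exact mul_le_mul_of_nonneg_left (by exact_mod_cast card_stringUnion_le hv) hg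
    calc ∑ Z, stringWeight k a v * attachWeight k a (stringUnion v) Z * (φ (stringUnion v) * 1)
        = stringWeight k a v * φ (stringUnion v) * ∑ Z, attachWeight k a (stringUnion v) Z := by
          rw [mul_sum]; exact sum_congr rfl fun Z _ => by ring
      _ ≤ stringWeight k a v * φ (stringUnion v) * (g * k * (m + 1)) :=
          mul_le_mul_of_nonneg_left hattach hWφ
      _ = _ := by ring
  · simp [stringWeight, hv]

theorem extensionSum_le_sum_stringSum {φ ψ : Finset Λ → ℝ} (hφ : ∀ U, 0 ≤ φ U)
    (hψ : ∀ Z, 0 ≤ ψ Z) :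
    extensionSum k a m φ ψ ≤ ∑ z, (∑ Z, attachWeight k a {z} Z * ψ Z) *
      stringSum k a m (fun U => φ U * memInd z U) := by
  rw [← sum_stringWeight_mul_sum_mem, extensionSum]
  refine sum_le_sum fun v _ => ?_
  calc ∑ Z, stringWeight k a v * attachWeight k a (stringUnion v) Z * (φ (stringUnion v) * ψ Z)
      = ∑ Z, stringWeight k a v * φ (stringUnion v) *
          (attachWeight k a (stringUnion v) Z * ψ Z) :=
        sum_congr rfl fun Z _ => by ring
    _ ≤ ∑ Z, stringWeight k a v * φ (stringUnion v) *
          ((∑ z ∈ stringUnion v, attachWeight k a {z} Z) * ψ Z) :=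
        sum_le_sum fun Z _ => mul_le_mul_of_nonneg_left
          (mul_le_mul_of_nonneg_right (attachWeight_le_sum_singleton ha _ Z) (hψ Z))
          (mul_nonneg (stringWeight_nonneg ha v) (hφ _))
    _ = _ := by
        rw [← mul_sum]
        simp only [sum_mul]
        rw [sum_comm]

theorem sum_attachWeight_singleton_mul_le (z : Λ) {ψ : Finset Λ → ℝ} (hψ : ∀ Z, 0 ≤ ψ Z) :
    ∑ Z, attachWeight k a {z} Z * ψ Z ≤ ∑ Z, a Z * memInd z Z * ψ Z :=
  sum_le_sum fun Z _ => mul_le_mul_of_nonneg_right (attachWeight_singleton_le ha z Z) (hψ Z)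

theorem extensionSum_one_le {B : ℝ} (hB : 0 ≤ B) (hN : ∀ z, stringSum k a m (memInd z) ≤ B)
    {ψ : Finset Λ → ℝ} (hψ : ∀ Z, 0 ≤ ψ Z) :
    extensionSum k a m (fun _ => 1) ψ ≤ B * (k * ∑ Z, a Z * ψ Z) := by
  refine (extensionSum_le_sum_stringSum ha (fun _ => zero_le_one) hψ).trans ?_
  simp only [one_mul]
  calc ∑ z, (∑ Z, attachWeight k a {z} Z * ψ Z) * stringSum k a m (memInd z)
      ≤ ∑ z, (∑ Z, attachWeight k a {z} Z * ψ Z) * B :=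
        sum_le_sum fun z _ => mul_le_mul_of_nonneg_left (hN z)
          (sum_nonneg fun Z _ => mul_nonneg (attachWeight_nonneg ha _ Z) (hψ Z))
    _ = B * ∑ Z, (∑ z, attachWeight k a {z} Z) * ψ Z := by
        rw [← sum_mul, sum_comm, mul_comm]; simp only [sum_mul]
    _ ≤ B * ∑ Z, k * a Z * ψ Z :=
        mul_le_mul_of_nonneg_left (sum_le_sum fun Z _ => mul_le_mul_of_nonneg_right
          (sum_attachWeight_singleton_le ha Z) (hψ Z)) hB
    _ = B * (k * ∑ Z, a Z * ψ Z) := by simp only [mul_sum, mul_assoc]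

theorem extensionSum_le_sum_mul {φ ψ : Finset Λ → ℝ} (hφ : ∀ U, 0 ≤ φ U)
    (hψ : ∀ Z, 0 ≤ ψ Z) {f h : Λ → ℝ}
    (hf : ∀ z, stringSum k a m (fun U => φ U * memInd z U) ≤ f z)
    (hh : ∀ z, ∑ Z, attachWeight k a {z} Z * ψ Z ≤ h z) :
    extensionSum k a m φ ψ ≤ ∑ z, h z * f z :=
  (extensionSum_le_sum_stringSum ha hφ hψ).trans <| sum_le_sum fun z _ =>
    mul_le_mul (hh z) (hf z)
      (stringSum_nonneg ha fun U => mul_nonneg (hφ U) (memInd_nonneg z U))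
      ((sum_nonneg fun Z _ => mul_nonneg (attachWeight_nonneg ha _ Z) (hψ Z)).trans (hh z))

theorem stringSum_succ_le_of_le {φ : Finset Λ → ℝ} {F : Finset Λ → Finset Λ → ℝ}
    (hF : ∀ U Z, φ (U ∪ Z) ≤ F U Z) :
    stringSum k a (m + 1) φ ≤ ∑ v : Fin (m + 1) → Finset Λ, ∑ Z,
      stringWeight k a v * attachWeight k a (stringUnion v) Z * F (stringUnion v) Z := by
  rw [stringSum_succ]
  exact sum_le_sum fun v _ => sum_le_sum fun Z _ => mul_le_mul_of_nonneg_left (hF _ _)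
    (mul_nonneg (stringWeight_nonneg ha v) (attachWeight_nonneg ha _ Z))

theorem stringSum_memInd_succ_le (x : Λ) :
    stringSum k a (m + 1) (memInd x) ≤
      extensionSum k a m (memInd x) (fun _ => 1) + extensionSum k a m (fun _ => 1) (memInd x) := by
  refine (stringSum_succ_le_of_le ha fun U Z => memInd_union_le x U Z).trans (le_of_eq ?_)
  simp only [extensionSum, ← sum_add_distrib]
  exact sum_congr rfl fun v _ => sum_congr rfl fun Z _ => by ring

theorem stringSum_memInd_mul_memInd_succ_le (x y : Λ) :
    stringSum k a (m + 1) (fun U => memInd x U * memInd y U) ≤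
      extensionSum k a m (fun U => memInd x U * memInd y U) (fun _ => 1) +
      extensionSum k a m (memInd x) (memInd y) + extensionSum k a m (memInd y) (memInd x) +
      extensionSum k a m (fun _ => 1) (fun Z => memInd x Z * memInd y Z) := by
  refine (stringSum_succ_le_of_le ha fun U Z => mul_le_mul (memInd_union_le x U Z)
    (memInd_union_le y U Z) (memInd_nonneg y _)
    (add_nonneg (memInd_nonneg x U) (memInd_nonneg x Z))).trans (le_of_eq ?_)
  simp only [extensionSum, ← sum_add_distrib]
  exact sum_congr rfl fun v _ => sum_congr rfl fun Z _ => by ring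

end StringSums

section Bounds

variable {Λ : Type} [Fintype Λ] [DecidableEq Λ] {k : ℕ} {a : Finset Λ → ℝ} {g G : ℝ}
  (ha : ∀ Z, 0 ≤ a Z) (hg : 0 ≤ g) (hsite : ∀ x, ∑ Z, a Z * memInd x Z ≤ g) (hgk : g * k ≤ G)
include ha hg hsite hgk

theorem stringSum_memInd_le (m : ℕ) (x : Λ) :
    stringSum k a m (memInd x) ≤ g * (m + 1).factorial * G ^ m := by
  have hG : 0 ≤ G := (mul_nonneg hg k.cast_nonneg).trans hgk
  induction m generalizing x with
  | zero => simpa using (stringSum_zero_le ha (memInd_nonneg x)).trans (hsite x)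
  | succ m ih =>
    set B := g * (m + 1).factorial * G ^ m
    have hB : 0 ≤ B := by positivity
    have h1 : extensionSum k a m (memInd x) (fun _ => 1) ≤ g * k * (m + 1) * B :=
      (extensionSum_le_card ha hg hsite (memInd_nonneg x)).trans
        (mul_le_mul_of_nonneg_left (ih x) (by positivity))
    have h2 : extensionSum k a m (fun _ => 1) (memInd x) ≤ B * (k * g) :=
      (extensionSum_one_le ha hB ih (memInd_nonneg x)).trans
        (mul_le_mul_of_nonneg_left (mul_le_mul_of_nonneg_left (hsite x) k.cast_nonneg) hB)
    calc stringSum k a (m + 1) (memInd x)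
        ≤ g * k * (m + 1) * B + B * (k * g) :=
          (stringSum_memInd_succ_le ha x).trans (add_le_add h1 h2)
      _ = (m + 2) * (g * k) * B := by ring
      _ ≤ (m + 2) * G * B := by gcongr
      _ = g * (m + 1 + 1).factorial * G ^ (m + 1) := by
          rw [Nat.factorial_succ]; push_cast; ring


variable {μ : ℝ} {K : Λ → Λ → ℝ} (hpair : ∀ x y, ∑ Z, a Z * memInd x Z * memInd y Z ≤ K x y)
  (hconv : ∀ x y, ∑ z, K x z * K z y ≤ μ * K x y)
include hpair hconv

theorem stringSum_memInd_mul_memInd_succ_le_of_le {m : ℕ} {C : ℝ} (hC : 0 ≤ C)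
    (ih : ∀ x y, stringSum k a m (fun U => memInd x U * memInd y U) ≤ C * K x y) (x y : Λ) :
    stringSum k a (m + 1) (fun U => memInd x U * memInd y U) ≤
      (g * k * (m + 1) + 2 * μ) * C * K x y + g * k * (m + 1).factorial * G ^ m * K x y := by
  have hG : 0 ≤ G := (mul_nonneg hg k.cast_nonneg).trans hgk
  have hind : ∀ (x : Λ) Z, 0 ≤ memInd x Z := memInd_nonneg
  have hconvC : ∀ f : Λ → ℝ, (∀ z, f z = C * (K x z * K z y)) → ∑ z, f z ≤ μ * (C * K x y) := by
    intro f hf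
    rw [sum_congr rfl fun z _ => hf z, ← mul_sum, mul_left_comm]
    exact mul_le_mul_of_nonneg_left (hconv x y) hC
  have h1 : extensionSum k a m (fun U => memInd x U * memInd y U) (fun _ => 1) ≤
      g * k * (m + 1) * (C * K x y) :=
    (extensionSum_le_card ha hg hsite fun U => mul_nonneg (hind x U) (hind y U)).trans
      (mul_le_mul_of_nonneg_left (ih x y) (by positivity))
  have h2 : extensionSum k a m (memInd x) (memInd y) ≤ μ * (C * K x y) :=
    (extensionSum_le_sum_mul ha (hind x) (hind y) (fun z => ih x z)
      (fun z => (sum_attachWeight_singleton_mul_le ha z (hind y)).trans (hpair z y))).trans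
      (hconvC _ fun z => by ring)
  have h3 : extensionSum k a m (memInd y) (memInd x) ≤ μ * (C * K x y) := by
    refine (extensionSum_le_sum_mul ha (hind y) (hind x) (f := fun z => C * K z y)
      (h := fun z => K x z) (fun z => ?_)
      (fun z => (sum_attachWeight_singleton_mul_le ha z (hind x)).trans ?_)).trans
      (hconvC _ fun z => by ring)
    · simpa only [mul_comm (memInd y _)] using ih z y
    · simpa only [mul_right_comm (a _)] using hpair x z
  have h4 : extensionSum k a m (fun _ => 1) (fun Z => memInd x Z * memInd y Z) ≤
      g * (m + 1).factorial * G ^ m * (k * K x y) :=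
    (extensionSum_one_le ha (by positivity) (stringSum_memInd_le ha hg hsite hgk m)
      fun Z => mul_nonneg (hind x Z) (hind y Z)).trans
      (mul_le_mul_of_nonneg_left (mul_le_mul_of_nonneg_left
        (by simpa only [mul_assoc] using hpair x y) k.cast_nonneg) (by positivity))
  calc _ ≤ _ := stringSum_memInd_mul_memInd_succ_le ha x y
    _ ≤ _ := add_le_add (add_le_add (add_le_add h1 h2) h3) h4
    _ = _ := by ring

theorem stringSum_memInd_mul_memInd_le (hμ : μ ≤ G) (m : ℕ) (x y : Λ) :
    stringSum k a m (fun U => memInd x U * memInd y U) ≤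
      (m + 1) * (m + 1).factorial * G ^ m * K x y := by
  have hG : 0 ≤ G := (mul_nonneg hg k.cast_nonneg).trans hgk
  have hind : ∀ (x : Λ) Z, 0 ≤ memInd x Z := memInd_nonneg
  induction m generalizing x y with
  | zero =>
    simpa [mul_assoc] using (stringSum_zero_le ha fun U => mul_nonneg (hind x U) (hind y U)).trans
      (by simpa only [mul_assoc] using hpair x y)
  | succ m ih =>
    have hK : 0 ≤ K x y :=
      (sum_nonneg fun Z _ => mul_nonneg (mul_nonneg (ha Z) (hind x Z)) (hind y Z)).trans
        (hpair x y)
    have hP : 0 ≤ (m + 1).factorial * G ^ m * K x y := mul_nonneg (by positivity) hK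
    have e1 := mul_le_mul_of_nonneg_right hgk
      (mul_nonneg (by positivity : (0 : ℝ) ≤ (m + 1) ^ 2 + 1) hP)
    have e2 := mul_le_mul_of_nonneg_right hμ
      (mul_nonneg (by positivity : (0 : ℝ) ≤ 2 * (m + 1)) hP)
    calc _ ≤ _ := stringSum_memInd_mul_memInd_succ_le_of_le ha hg hsite hgk hpair hconv
          (by positivity) ih x y
      _ ≤ ((m + 1) ^ 2 + 1) * G * ((m + 1).factorial * G ^ m * K x y) +
            2 * (m + 1) * G * ((m + 1).factorial * G ^ m * K x y) := by
          linear_combination e1 + e2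
      _ = ((m + 1 : ℕ) + 1) * (m + 1 + 1).factorial * G ^ (m + 1) * K x y := by
          push_cast [Nat.factorial_succ]; ring

end Bounds

end

end ConnectedString

open ConnectedString

theorem exp_weighted_two_point_string_sum_bound_general
    {Λ : Type} [Fintype Λ] [DecidableEq Λ] (d : Λ → Λ → ℕ)
    (k : ℕ) (α : ℝ)
    (J g lam : ℝ) (hJ : 0 < J) (hg : 0 ≤ g) (hlam : 1 ≤ lam)
    (a : Finset Λ → ℝ) (ha : ∀ Z, 0 ≤ a Z)
    (hpair : ∀ i i' : Λ,
      ∑ Z ∈ Finset.univ.filter (fun Z : Finset Λ => i ∈ Z ∧ i' ∈ Z), a Z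
        ≤ J * ((d i i' : ℝ) + 1) ^ (-α))
    (hsite : ∀ i : Λ,
      ∑ Z ∈ Finset.univ.filter (fun Z : Finset Λ => i ∈ Z), a Z ≤ g)
    (hlam₂ : ∀ i i' : Λ,
      ∑ i₀ : Λ, ((d i i₀ : ℝ) + 1) ^ (-α) * ((d i₀ i' : ℝ) + 1) ^ (-α)
        ≤ lam * ((d i i' : ℝ) + 1) ^ (-α))
    (i i' : Λ) (t : ℝ)
    (ht : 2 * Real.exp 1 * max (g * k) (lam * J) * |t| ≤ 1) :
    ∀ M : ℕ,
      ∑ m' ∈ Finset.range M,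
        (2 * |t|) ^ m' / (m'.factorial : ℝ) *
          ∑ w ∈ Finset.univ.filter (fun w : Fin (m' + 1) → Finset Λ =>
              (∀ j, (w j).Nonempty ∧ (w j).card ≤ k) ∧ SeqConnected w ∧
              i ∈ Finset.univ.biUnion w ∧ i' ∈ Finset.univ.biUnion w),
            ∏ j, a (w j)
      ≤ 6 * max (g * k) (lam * J) * ((d i i' : ℝ) + 1) ^ (-α) := by
  intro M
  set G := max (g * k) (lam * J)
  set dec : Λ → Λ → ℝ := fun x y => ((d x y : ℝ) + 1) ^ (-α)
  have hG : 0 ≤ G := (mul_nonneg hg k.cast_nonneg).trans (le_max_left _ _)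
  have hJG : J ≤ G := (le_mul_of_one_le_left hJ.le hlam).trans (le_max_right _ _)
  have hsite' (x : Λ) := (sum_mul_memInd_eq_sum_filter a x).trans_le (hsite x)
  have hpair' (x y : Λ) : ∑ Z, a Z * memInd x Z * memInd y Z ≤ J * dec x y :=
    (sum_mul_memInd_mul_memInd_eq_sum_filter a x y).trans_le (hpair x y)
  have hterm (m : ℕ) := (sum_filter_eq_stringSum k a i i').trans_le
    (stringSum_memInd_mul_memInd_le ha hg hsite' (le_max_left _ _) hpair'
      (sum_const_mul_mul_const_mul_le hlam₂ J) (le_max_right _ _) m i i')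
  have hdec : 0 ≤ dec i i' := by positivity
  calc _ ≤ ∑ m ∈ range M, (2 * |t|) ^ m / (m.factorial : ℝ) *
        ((m + 1) * (m + 1).factorial * G ^ m * (J * dec i i')) :=
        sum_le_sum fun m _ => mul_le_mul_of_nonneg_left (hterm m) (by positivity)
    _ ≤ 6 * (J * dec i i') :=
        sum_range_pow_div_factorial_mul_le (by positivity) hG (mul_nonneg hJ.le hdec)
          (by linear_combination ht) M
    _ ≤ 6 * G * dec i i' := by
        rw [← mul_assoc]; gcongr

/-- **Exponentially weighted two-point string-sum bound**
(first-step inequality of the Supplement): for `2e g̃ |t| ≤ 1`,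
`Σ_{m'} ((2|t|)^{m'}/m'!) Σ_{connected strings containing i,i'} ∏ a ≤ 6g̃ (d(i,i')+1)^{-α}`
(stated via all partial sums of the series). -/
theorem exp_weighted_two_point_string_sum_bound
    {Λ : Type} [Fintype Λ] [DecidableEq Λ] (d : Λ → Λ → ℕ)
    (hmet : IsLatticeMetric d) (k : ℕ) (α D : ℝ) (hD : 0 < D) (hα : D < α)
    (J g lam : ℝ) (hJ : 0 < J) (hg : 0 ≤ g) (hlam : 1 ≤ lam)
    (a : Finset Λ → ℝ) (ha : ∀ Z, 0 ≤ a Z)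
    (hpair : ∀ i i' : Λ,
      ∑ Z ∈ Finset.univ.filter (fun Z : Finset Λ => i ∈ Z ∧ i' ∈ Z), a Z
        ≤ J * ((d i i' : ℝ) + 1) ^ (-α))
    (hsite : ∀ i : Λ,
      ∑ Z ∈ Finset.univ.filter (fun Z : Finset Λ => i ∈ Z), a Z ≤ g)
    (hlam₂ : ∀ i i' : Λ,
      ∑ i₀ : Λ, ((d i i₀ : ℝ) + 1) ^ (-α) * ((d i₀ i' : ℝ) + 1) ^ (-α)
        ≤ lam * ((d i i' : ℝ) + 1) ^ (-α))
    (i i' : Λ) (t : ℝ)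
    (ht : 2 * Real.exp 1 * max (g * k) (lam * J) * |t| ≤ 1) :
    ∀ M : ℕ,
      ∑ m' ∈ Finset.range M,
        (2 * |t|) ^ m' / (m'.factorial : ℝ) *
          ∑ w ∈ Finset.univ.filter (fun w : Fin (m' + 1) → Finset Λ =>
              (∀ j, (w j).Nonempty ∧ (w j).card ≤ k) ∧ SeqConnected w ∧
              i ∈ Finset.univ.biUnion w ∧ i' ∈ Finset.univ.biUnion w),
            ∏ j, a (w j)
      ≤ 6 * max (g * k) (lam * J) * ((d i i' : ℝ) + 1) ^ (-α) :=
  exp_weighted_two_point_string_sum_bound_general d k α J g lam hJ hg hlam a ha hpair hsite hlam₂ i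
    i' t ht
end

section
/- Anchored string-sum bound with minimal-distance weight. Suppose additionally that |{i' ∈ Λ : d(i,i') = s}| ≤ γ s^{D−1} for every i ∈ Λ and integer s ≥ 1, with γ ≥ 1. Then for every integer m₁ ≥ 0 and all sites i, i₁ ∈ Λ, Σ_{(Z₀,…,Z_{m₁}) connected, Z₀ ∋ i₁} [ ∏_{j=0}^{m₁} a_{Z_j} ] / ( min_{i'∈ Z₀∪⋯∪Z_{m₁}} d(i,i') + 1 )^{α} ≤ c₂ · m₁! (m₁+1)² g̃^{m₁+1} (d(i,i₁)+1)^{−α}, where c₂ := 2^{α} (2 + γ/(α−D)). -/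
open scoped Classical ENNReal Matrix ComplexOrder
open Complex

/-!
Bounding the weight `(dist(i, ⋃ Z_j) + 1)^{-α}` by `∑_{v ∈ ⋃ Z_j} (d(i,v) + 1)^{-α}` reduces the
claim to the two-point sums `S_m(x, y)` over connected strings anchored at `x` whose support
contains `y`. Split off the last set `Z` of a string counted by `S_{m+1}`: either `y` already lies
in the support of the remaining string, which has at most `(m+1) k` sites, so the sets `Z` meeting
it weigh at most `(m+1) k g`; or `y ∈ Z`, and `Z` bridges some site `v` of that support to `y` at
cost `J (d(y,v) + 1)^{-α}`. With the convolution inequality defining `λ` this gives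
`S_m(x, y) ≤ (m+1)! g̃^m J (d(y,x) + 1)^{-α}` by induction, and one more convolution, now with the
weight at `i`, bounds the sum by `(m+1)! g̃^{m+1} (d(i,i₁) + 1)^{-α}`.
-/

open Finset
open scoped Nat

lemma div_rpow_distSet_le_mul_sum {Λ : Type} (d : Λ → Λ → ℕ) (i : Λ) {U : Finset Λ}
    (hU : U.Nonempty) {c : ℝ} (hc : 0 ≤ c) (α : ℝ) :
    c / ((distSet d i U : ℝ) + 1) ^ α ≤ c * ∑ v ∈ U, ((d i v : ℝ) + 1) ^ (-α) := by
  obtain ⟨v, hv, hdv⟩ : distSet d i U ∈ {n | ∃ j ∈ U, d i j = n} :=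
    Nat.sInf_mem (let ⟨j, hj⟩ := hU; ⟨d i j, j, hj, rfl⟩)
  rw [div_eq_mul_inv, ← Real.rpow_neg (by positivity), ← hdv]
  exact mul_le_mul_of_nonneg_left
    (single_le_sum (f := fun v => ((d i v : ℝ) + 1) ^ (-α)) (fun _ _ => by positivity) hv) hc

lemma sum_kernel_mul_le {Λ : Type*} [Fintype Λ] {F : Λ → Λ → ℝ} {lam : ℝ}
    (hF : ∀ i j, 0 ≤ F i j) (hconv : ∀ i i', ∑ i₀, F i i₀ * F i₀ i' ≤ lam * F i i')
    {s : Λ → ℝ} {C : ℝ} (hC : 0 ≤ C) {x : Λ} (hs : ∀ v, s v ≤ C * F v x) (y : Λ) :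
    ∑ v, F y v * s v ≤ C * lam * F y x :=
  calc ∑ v, F y v * s v ≤ ∑ v, C * (F y v * F v x) :=
        sum_le_sum fun v _ => by nlinarith [hs v, hF y v]
    _ = C * ∑ v, F y v * F v x := (mul_sum _ _ _).symm
    _ ≤ C * (lam * F y x) := mul_le_mul_of_nonneg_left (hconv y x) hC
    _ = C * lam * F y x := (mul_assoc _ _ _).symm

lemma sum_filter_inter_nonempty_le {Λ : Type*} [DecidableEq Λ] (s : Finset (Finset Λ))
    (U : Finset Λ) {a : Finset Λ → ℝ} (ha : ∀ Z, 0 ≤ a Z) :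
    ∑ Z ∈ s.filter (fun Z => (Z ∩ U).Nonempty), a Z ≤ ∑ v ∈ U, ∑ Z ∈ s.filter (v ∈ ·), a Z := by
  simp_rw [sum_filter]
  rw [sum_comm]
  refine sum_le_sum fun Z _ => ?_
  split_ifs with hZ
  · obtain ⟨v, hv⟩ := hZ
    rw [mem_inter] at hv
    calc a Z = if v ∈ Z then a Z else 0 := (if_pos hv.1).symm
      _ ≤ ∑ v ∈ U, if v ∈ Z then a Z else 0 :=
        single_le_sum (fun _ _ => ite_nonneg (ha Z) le_rfl) hv.2
  · exact sum_nonneg fun _ _ => ite_nonneg (ha Z) le_rfl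

lemma factorial_succ_le_two_rpow_mul {α D γ : ℝ} (hα : 0 ≤ α) (hDα : D ≤ α) (hγ : 0 ≤ γ)
    (m : ℕ) : ((m + 1)! : ℝ) ≤ 2 ^ α * (2 + γ / (α - D)) * m ! * (m + 1) ^ 2 := by
  have hc : 1 ≤ (2 : ℝ) ^ α * (2 + γ / (α - D)) :=
    one_le_mul_of_one_le_of_one_le (Real.one_le_rpow one_le_two hα)
      (by linarith [div_nonneg hγ (sub_nonneg.2 hDα)])
  calc ((m + 1)! : ℝ) = 1 * (m ! * (m + 1)) := by push_cast [Nat.factorial_succ]; ring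
    _ ≤ (2 ^ α * (2 + γ / (α - D)) * (m + 1)) * (m ! * (m + 1)) := by
          gcongr
          exact one_le_mul_of_one_le_of_one_le hc (by linarith [(m.cast_nonneg : (0 : ℝ) ≤ m)])
    _ = 2 ^ α * (2 + γ / (α - D)) * m ! * (m + 1) ^ 2 := by ring

section AnchoredStrings

variable {Λ : Type} [Fintype Λ] [DecidableEq Λ]

omit [Fintype Λ] in
lemma biUnion_snoc {m : ℕ} (p : Fin (m + 1) → Finset Λ) (Z : Finset Λ) :
    univ.biUnion (Fin.snoc p Z : Fin (m + 2) → Finset Λ) = univ.biUnion p ∪ Z := by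
  ext v
  simp [Fin.exists_fin_succ', or_comm]

omit [Fintype Λ] in
lemma biUnion_filter_lt_snoc {m n : ℕ} (hn : n ≤ m + 1) (p : Fin (m + 1) → Finset Λ)
    (Z : Finset Λ) :
    (univ.filter fun j : Fin (m + 2) => (j : ℕ) < n).biUnion (Fin.snoc p Z : Fin (m + 2) → _) =
      (univ.filter fun j : Fin (m + 1) => (j : ℕ) < n).biUnion p := by
  ext v
  simp only [mem_biUnion, mem_filter, mem_univ, true_and, Fin.exists_fin_succ', Fin.val_castSucc,
    Fin.snoc_castSucc, Fin.val_last, Fin.snoc_last, or_iff_left_iff_imp, and_imp]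
  omega

lemma seqConnected_snoc_iff {m : ℕ} (p : Fin (m + 1) → Finset Λ) (Z : Finset Λ) :
    SeqConnected (Fin.snoc p Z : Fin (m + 2) → Finset Λ) ↔
      SeqConnected p ∧ (Z ∩ univ.biUnion p).Nonempty := by
  unfold SeqConnected
  rw [Fin.forall_fin_succ', Fin.snoc_last, Fin.val_last, biUnion_filter_lt_snoc le_rfl,
    filter_true_of_mem fun j _ => j.isLt]
  refine and_congr (forall_congr' fun j => ?_) (by simp)
  rw [Fin.snoc_castSucc, Fin.val_castSucc, biUnion_filter_lt_snoc j.isLt.le]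

noncomputable def anchoredStrings (k m : ℕ) (x : Λ) : Finset (Fin (m + 1) → Finset Λ) :=
  univ.filter fun w => (∀ j, (w j).Nonempty ∧ (w j).card ≤ k) ∧ SeqConnected w ∧ x ∈ w 0

lemma card_biUnion_le_of_mem_anchoredStrings {k m : ℕ} {x : Λ} {w : Fin (m + 1) → Finset Λ}
    (hw : w ∈ anchoredStrings k m x) : (univ.biUnion w).card ≤ (m + 1) * k := by
  simpa using card_biUnion_le_card_mul univ w k fun j _ => ((mem_filter.1 hw).2.1 j).2

lemma snoc_mem_anchoredStrings_iff {k m : ℕ} {x : Λ} (p : Fin (m + 1) → Finset Λ)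
    (Z : Finset Λ) :
    (Fin.snoc p Z : Fin (m + 2) → Finset Λ) ∈ anchoredStrings k (m + 1) x ↔
      p ∈ anchoredStrings k m x ∧ (Z.Nonempty ∧ Z.card ≤ k) ∧ (Z ∩ univ.biUnion p).Nonempty := by
  simp only [anchoredStrings, mem_filter, mem_univ, true_and, Fin.forall_fin_succ',
    Fin.snoc_castSucc, Fin.snoc_last, seqConnected_snoc_iff]
  rw [show (0 : Fin (m + 2)) = Fin.castSucc 0 from rfl, Fin.snoc_castSucc]
  tauto

lemma sum_anchoredStrings_succ {k m : ℕ} {x : Λ} (f : (Fin (m + 2) → Finset Λ) → ℝ) :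
    ∑ w ∈ anchoredStrings k (m + 1) x, f w =
      ∑ p ∈ anchoredStrings k m x, ∑ Z ∈ univ.filter (fun Z : Finset Λ =>
        (Z.Nonempty ∧ Z.card ≤ k) ∧ (Z ∩ univ.biUnion p).Nonempty), f (Fin.snoc p Z) := by
  symm
  rw [sum_sigma']
  refine sum_bij' (fun q _ => Fin.snoc q.1 q.2) (fun w _ => ⟨Fin.init w, w (Fin.last _)⟩)
    (fun q hq => ?_) (fun w hw => ?_) (fun q _ => by simp) (fun w _ => Fin.snoc_init_self w)
    (fun _ _ => rfl)
  · rw [mem_sigma, mem_filter] at hq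
    exact (snoc_mem_anchoredStrings_iff _ _).2 ⟨hq.1, hq.2.2⟩
  · rw [← Fin.snoc_init_self w, snoc_mem_anchoredStrings_iff] at hw
    simpa using hw

noncomputable def twoPointSum (a : Finset Λ → ℝ) (k m : ℕ) (x y : Λ) : ℝ :=
  ∑ w ∈ (anchoredStrings k m x).filter (fun w => y ∈ univ.biUnion w), ∏ j, a (w j)

lemma sum_anchoredStrings_mul_sum_biUnion (a : Finset Λ → ℝ) (k m : ℕ) (x : Λ) (h : Λ → ℝ) :
    ∑ w ∈ anchoredStrings k m x, (∏ j, a (w j)) * ∑ v ∈ univ.biUnion w, h v =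
      ∑ v, h v * twoPointSum a k m x v := by
  simp_rw [twoPointSum, mul_sum]
  rw [sum_comm' (t' := univ) (s' := fun v => (anchoredStrings k m x).filter (v ∈ univ.biUnion ·))
    (fun w v => by simp [and_comm])]
  simp_rw [mul_comm]

lemma twoPointSum_succ_le {a : Finset Λ → ℝ} (ha : ∀ Z, 0 ≤ a Z) (k m : ℕ) (x y : Λ) :
    twoPointSum a k (m + 1) x y ≤ ∑ p ∈ anchoredStrings k m x, (∏ j, a (p j)) *
      ∑ Z ∈ univ.filter (fun Z : Finset Λ =>
        (Z ∩ univ.biUnion p).Nonempty ∧ y ∈ univ.biUnion p ∪ Z), a Z := by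
  rw [twoPointSum, sum_filter, sum_anchoredStrings_succ]
  refine sum_le_sum fun p _ => ?_
  simp only [sum_filter, mul_sum]
  refine sum_le_sum fun Z _ => ?_
  rw [biUnion_snoc, Fin.prod_univ_castSucc, Fin.snoc_last]
  simp only [Fin.snoc_castSucc]
  have := mul_nonneg (prod_nonneg (s := univ) fun j _ => ha (p j)) (ha Z)
  split_ifs <;> simp_all

section TwoPointBound

variable {a : Finset Λ → ℝ} {F : Λ → Λ → ℝ} {g J lam : ℝ}

lemma sum_filter_inter_nonempty_and_mem_union_le (ha : ∀ Z, 0 ≤ a Z) (hF : ∀ i j, 0 ≤ F i j)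
    (hJ : 0 ≤ J) (hsite : ∀ i, ∑ Z ∈ univ.filter (fun Z : Finset Λ => i ∈ Z), a Z ≤ g)
    (hpair : ∀ i i', ∑ Z ∈ univ.filter (fun Z : Finset Λ => i ∈ Z ∧ i' ∈ Z), a Z ≤ J * F i i')
    (U : Finset Λ) (y : Λ) :
    ∑ Z ∈ univ.filter (fun Z => (Z ∩ U).Nonempty ∧ y ∈ U ∪ Z), a Z ≤
      (if y ∈ U then U.card * g else 0) + J * ∑ v ∈ U, F y v := by
  by_cases hy : y ∈ U
  · have hmeet : ∑ Z ∈ univ.filter (fun Z => (Z ∩ U).Nonempty), a Z ≤ U.card * g :=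
      (sum_filter_inter_nonempty_le univ U ha).trans <|
        (sum_le_sum fun v _ => hsite v).trans_eq (by simp)
    have hrest : 0 ≤ J * ∑ v ∈ U, F y v := mul_nonneg hJ (sum_nonneg fun v _ => hF y v)
    simp only [hy, true_or, mem_union, and_true, if_true]
    linarith
  · have hbridge := sum_filter_inter_nonempty_le (univ.filter (y ∈ ·)) U ha
    simp only [filter_filter] at hbridge
    simp only [hy, false_or, mem_union, if_false, zero_add, mul_sum]
    calc _ = ∑ Z ∈ univ.filter (fun Z => y ∈ Z ∧ (Z ∩ U).Nonempty), a Z := by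
          simp only [and_comm]
      _ ≤ _ := hbridge
      _ ≤ _ := sum_le_sum fun v _ => hpair y v

lemma twoPointSum_zero_le (ha : ∀ Z, 0 ≤ a Z)
    (hpair : ∀ i i', ∑ Z ∈ univ.filter (fun Z : Finset Λ => i ∈ Z ∧ i' ∈ Z), a Z ≤ J * F i i')
    (k : ℕ) (x y : Λ) : twoPointSum a k 0 x y ≤ J * F y x := by
  let e := Equiv.funUnique (Fin 1) (Finset Λ)
  calc twoPointSum a k 0 x y
      = ∑ Z ∈ ((anchoredStrings k 0 x).filter (fun w => y ∈ univ.biUnion w)).map e.toEmbedding,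
          a Z := by simp [twoPointSum, e]
    _ ≤ ∑ Z ∈ univ.filter (fun Z : Finset Λ => y ∈ Z ∧ x ∈ Z), a Z := by
      refine sum_le_sum_of_subset_of_nonneg (fun Z hZ => ?_) fun Z _ _ => ha Z
      obtain ⟨w, hw, rfl⟩ := mem_map.1 hZ
      obtain ⟨hw, hy⟩ := mem_filter.1 hw
      obtain ⟨j, -, hj⟩ := mem_biUnion.1 hy
      obtain rfl := Fin.fin_one_eq_zero j
      exact mem_filter.2 ⟨mem_univ _, hj, (mem_filter.1 hw).2.2.2⟩
    _ ≤ J * F y x := hpair y x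

lemma twoPointSum_le (ha : ∀ Z, 0 ≤ a Z) (hF : ∀ i j, 0 ≤ F i j) (hJ : 0 ≤ J) (hg : 0 ≤ g)
    (hsite : ∀ i, ∑ Z ∈ univ.filter (fun Z : Finset Λ => i ∈ Z), a Z ≤ g)
    (hpair : ∀ i i', ∑ Z ∈ univ.filter (fun Z : Finset Λ => i ∈ Z ∧ i' ∈ Z), a Z ≤ J * F i i')
    (hconv : ∀ i i', ∑ i₀, F i i₀ * F i₀ i' ≤ lam * F i i') (k m : ℕ) (x y : Λ) :
    twoPointSum a k m x y ≤ (m + 1)! * max (g * k) (lam * J) ^ m * J * F y x := by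
  set G := max (g * k) (lam * J)
  induction m generalizing y with
  | zero => simpa using twoPointSum_zero_le ha hpair k x y
  | succ m ih =>
    set C := ((m + 1)! : ℝ) * G ^ m * J
    have hC : 0 ≤ C := by positivity
    have hcard : ∀ p ∈ anchoredStrings k m x, ((univ.biUnion p).card : ℝ) * g ≤ (m + 1) * G := by
      intro p hp
      calc ((univ.biUnion p).card : ℝ) * g ≤ ((m + 1) * k : ℕ) * g := by
            gcongr; exact card_biUnion_le_of_mem_anchoredStrings hp
        _ = (m + 1) * (g * k) := by push_cast; ring
        _ ≤ (m + 1) * G := by gcongr; exact le_max_left _ _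
    calc twoPointSum a k (m + 1) x y
        ≤ ∑ p ∈ anchoredStrings k m x, (∏ j, a (p j)) *
            ((if y ∈ univ.biUnion p then (m + 1) * G else 0) +
              J * ∑ v ∈ univ.biUnion p, F y v) := by
          refine (twoPointSum_succ_le ha k m x y).trans (sum_le_sum fun p hp => ?_)
          refine mul_le_mul_of_nonneg_left ?_ (prod_nonneg fun j _ => ha (p j))
          refine (sum_filter_inter_nonempty_and_mem_union_le ha hF hJ hsite hpair _ y).trans ?_
          gcongr
          split_ifs
          exacts [hcard p hp, le_rfl]
      _ = (m + 1) * G * twoPointSum a k m x y + J * ∑ v, F y v * twoPointSum a k m x v := by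
          simp only [mul_add, sum_add_distrib, mul_ite, mul_zero, mul_left_comm _ J, ← mul_sum,
            sum_anchoredStrings_mul_sum_biUnion]
          rw [← sum_filter, ← sum_mul, twoPointSum, mul_comm]
      _ ≤ (m + 1) * G * (C * F y x) + J * (C * lam * F y x) := by
          gcongr
          · exact ih y
          · exact sum_kernel_mul_le hF hconv hC ih y
      _ ≤ C * F y x * ((m + 2) * G) := by
          have hCF : 0 ≤ C * F y x := mul_nonneg hC (hF y x)
          linear_combination mul_le_mul_of_nonneg_left (le_max_right (g * k) (lam * J)) hCF
      _ = (m + 1 + 1)! * G ^ (m + 1) * J * F y x := by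
          push_cast [Nat.factorial_succ (m + 1)]
          ring

end TwoPointBound

end AnchoredStrings

theorem anchored_string_sum_bound_general
    {Λ : Type} [Fintype Λ] [DecidableEq Λ] (d : Λ → Λ → ℕ)
    (k : ℕ) (α D : ℝ) (hD : 0 < D) (hα : D < α)
    (J g lam γ : ℝ) (hJ : 0 < J) (hg : 0 ≤ g) (hγ : 1 ≤ γ)
    (a : Finset Λ → ℝ) (ha : ∀ Z, 0 ≤ a Z)
    (hpair : ∀ i i' : Λ,
      ∑ Z ∈ Finset.univ.filter (fun Z : Finset Λ => i ∈ Z ∧ i' ∈ Z), a Z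
        ≤ J * ((d i i' : ℝ) + 1) ^ (-α))
    (hsite : ∀ i : Λ,
      ∑ Z ∈ Finset.univ.filter (fun Z : Finset Λ => i ∈ Z), a Z ≤ g)
    (hlam₂ : ∀ i i' : Λ,
      ∑ i₀ : Λ, ((d i i₀ : ℝ) + 1) ^ (-α) * ((d i₀ i' : ℝ) + 1) ^ (-α)
        ≤ lam * ((d i i' : ℝ) + 1) ^ (-α))
    (m₁ : ℕ) (i i₁ : Λ) :
    ∑ w ∈ Finset.univ.filter (fun w : Fin (m₁ + 1) → Finset Λ =>
        (∀ j, (w j).Nonempty ∧ (w j).card ≤ k) ∧ SeqConnected w ∧ i₁ ∈ w 0),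
      (∏ j, a (w j)) /
        ((distSet d i (Finset.univ.biUnion w) : ℝ) + 1) ^ α
      ≤ (2 : ℝ) ^ α * (2 + γ / (α - D)) * (m₁.factorial : ℝ) * ((m₁ : ℝ) + 1) ^ 2 *
          max (g * k) (lam * J) ^ (m₁ + 1) * ((d i i₁ : ℝ) + 1) ^ (-α) := by
  set F : Λ → Λ → ℝ := fun u v => ((d u v : ℝ) + 1) ^ (-α)
  set G := max (g * k) (lam * J)
  have hF : ∀ u v, 0 ≤ F u v := fun _ _ => by positivity
  calc _ ≤ ∑ w ∈ anchoredStrings k m₁ i₁, (∏ j, a (w j)) * ∑ v ∈ univ.biUnion w, F i v :=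
        sum_le_sum fun w hw => div_rpow_distSet_le_mul_sum d i
          ⟨i₁, mem_biUnion.2 ⟨0, mem_univ _, (mem_filter.1 hw).2.2.2⟩⟩
          (prod_nonneg fun j _ => ha (w j)) α
    _ = ∑ v, F i v * twoPointSum a k m₁ i₁ v := sum_anchoredStrings_mul_sum_biUnion a k m₁ i₁ _
    _ ≤ (m₁ + 1)! * G ^ m₁ * J * lam * F i i₁ := sum_kernel_mul_le hF hlam₂
          (by positivity) (twoPointSum_le ha hF hJ.le hg hsite hpair hlam₂ k m₁ i₁) i
    _ = (m₁ + 1)! * G ^ m₁ * (lam * J) * F i i₁ := by ring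
    _ ≤ (m₁ + 1)! * G ^ m₁ * G * F i i₁ := by gcongr; exact le_max_right _ _
    _ ≤ (2 : ℝ) ^ α * (2 + γ / (α - D)) * m₁ ! * (m₁ + 1) ^ 2 * G ^ m₁ * G * F i i₁ := by
          gcongr
          exact factorial_succ_le_two_rpow_mul (by linarith) hα.le (by linarith) m₁
    _ = _ := by ring

/-- **Anchored string-sum bound with minimal-distance weight:**
the sum over connected sequences with `Z₀ ∋ i₁`, weighted by
`(min_{i'∈Z₀∪⋯∪Z_{m₁}} d(i,i') + 1)^{-α}`, is bounded by
`c₂ m₁! (m₁+1)² g̃^{m₁+1} (d(i,i₁)+1)^{-α}` with `c₂ = 2^α (2 + γ/(α-D))`. -/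
theorem anchored_string_sum_bound
    {Λ : Type} [Fintype Λ] [DecidableEq Λ] (d : Λ → Λ → ℕ)
    (hmet : IsLatticeMetric d) (k : ℕ) (α D : ℝ) (hD : 0 < D) (hα : D < α)
    (J g lam γ : ℝ) (hJ : 0 < J) (hg : 0 ≤ g) (hlam : 1 ≤ lam) (hγ : 1 ≤ γ)
    (hgrow : ∀ (i : Λ) (s : ℕ), 1 ≤ s →
      ((Finset.univ.filter (fun i' : Λ => d i i' = s)).card : ℝ) ≤ γ * (s : ℝ) ^ (D - 1))
    (a : Finset Λ → ℝ) (ha : ∀ Z, 0 ≤ a Z)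
    (hpair : ∀ i i' : Λ,
      ∑ Z ∈ Finset.univ.filter (fun Z : Finset Λ => i ∈ Z ∧ i' ∈ Z), a Z
        ≤ J * ((d i i' : ℝ) + 1) ^ (-α))
    (hsite : ∀ i : Λ,
      ∑ Z ∈ Finset.univ.filter (fun Z : Finset Λ => i ∈ Z), a Z ≤ g)
    (hlam₂ : ∀ i i' : Λ,
      ∑ i₀ : Λ, ((d i i₀ : ℝ) + 1) ^ (-α) * ((d i₀ i' : ℝ) + 1) ^ (-α)
        ≤ lam * ((d i i' : ℝ) + 1) ^ (-α))
    (m₁ : ℕ) (i i₁ : Λ) :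
    ∑ w ∈ Finset.univ.filter (fun w : Fin (m₁ + 1) → Finset Λ =>
        (∀ j, (w j).Nonempty ∧ (w j).card ≤ k) ∧ SeqConnected w ∧ i₁ ∈ w 0),
      (∏ j, a (w j)) /
        ((distSet d i (Finset.univ.biUnion w) : ℝ) + 1) ^ α
      ≤ (2 : ℝ) ^ α * (2 + γ / (α - D)) * (m₁.factorial : ℝ) * ((m₁ : ℝ) + 1) ^ 2 *
          max (g * k) (lam * J) ^ (m₁ + 1) * ((d i i₁ : ℝ) + 1) ^ (-α) :=
  anchored_string_sum_bound_general d k α D hD hα J g lam γ hJ hg hγ a ha hpair hsite hlam₂ m₁ i i₁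
end
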